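/- Define U_{α₁⋯α_m} := (ℏ∇_{α_m}) ⋯ (ℏ∇_{α₁}) 1, where ℏ∇_α(w) = ℏ ∂_α w + (∂_α Γ)·w acts on ℬ⁰[[t]][[ℏ]]. Then for every multi-index α = (α₁,…,α_m), U_α = Σ_{i=0}^{m−1} (ⁱU_α) ℏⁱ, where ⁱU_α = Σ (1/(m−i)!) Γ_{α̲₁} ⋯ Γ_{α̲_{m−i}}, the sum running over all ordered decompositions of the index multiset α into m−i disjoint nonempty blocks α̲₁ ⊔ ⋯ ⊔ α̲_{m−i} = α, and Γ_{β₁⋯β_ℓ} := ∂_{β_ℓ} ⋯ ∂_{β₁} Γ. -/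

import Mathlib

open Finset Function

variable {I : Type} [DecidableEq I] {R : Type} [CommRing R] [Algebra ℚ R]

/-- `∂/∂t^α` on `ℬ⁰[[t]]`. -/
noncomputable def tderiv (α : I) (f : MvPowerSeries I R) : MvPowerSeries I R :=
  fun e => (e α + 1) • f (e + Finsupp.single α 1)

/-- `∂/∂t^α` on `ℬ⁰[[t]][[ℏ]]`, coefficientwise in `ℏ`. -/
noncomputable def tderivH (α : I) (F : PowerSeries (MvPowerSeries I R)) :
    PowerSeries (MvPowerSeries I R) :=
  PowerSeries.mk fun k => tderiv α (PowerSeries.coeff k F)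

/-- `ℏ∇_α(w) = ℏ ∂_α w + (∂_αΓ)·w`. -/
noncomputable def hnabla (Γ : MvPowerSeries I R) (α : I)
    (w : PowerSeries (MvPowerSeries I R)) : PowerSeries (MvPowerSeries I R) :=
  PowerSeries.X * tderivH α w + PowerSeries.C (tderiv α Γ) * w

/-- `U_{α₁⋯α_m} = (ℏ∇_{α_m}) ⋯ (ℏ∇_{α₁}) 1`, for the multi-index given as a list. -/
noncomputable def Ufn (Γ : MvPowerSeries I R) (l : List I) :
    PowerSeries (MvPowerSeries I R) :=
  l.foldl (fun w a => hnabla Γ a w) 1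

/-- `Γ_{β₁⋯β_ℓ} = ∂_{β_ℓ} ⋯ ∂_{β₁} Γ` for a block of positions `b ⊆ {1,…,m}` of the
multi-index `α`, the block being enumerated in increasing order of positions. -/
noncomputable def Gblock (Γ : MvPowerSeries I R) {m : ℕ} (α : Fin m → I)
    (b : Finset (Fin m)) : MvPowerSeries I R :=
  ((b.sort (· ≤ ·)).map α).foldl (fun f β => tderiv β f) Γ

/-- `ⁱU_α = Σ (1/(m−i)!) Γ_{α̲₁} ⋯ Γ_{α̲_{m−i}}`, the sum running over ordered
decompositions of the index set of `α` into `m−i` disjoint nonempty blocks (equivalently,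
over surjections `g : Fin m → Fin (m−i)`, with the `1/(m−i)!` normalization). -/
noncomputable def iU (Γ : MvPowerSeries I R) {m : ℕ} (α : Fin m → I) (i : ℕ) :
    MvPowerSeries I R :=
  (((m - i).factorial : ℚ)⁻¹) •
    ∑ g : Fin m → Fin (m - i),
      if Surjective g then ∏ j : Fin (m - i), Gblock Γ α (univ.filter fun p => g p = j)
      else 0

/-! The operator `ℏ∇_a` multiplies by `∂_aΓ` and differentiates with weight `ℏ`, so appending
an index `a` to `α` changes the coefficients of `U_α` by a two-term recursion. The partition sums
satisfy the same recursion: in a partition of the positions of the multi-index `(α, a)`, the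
last position is either a singleton block, contributing the factor `∂_aΓ`, or it joins one of
the blocks of a partition of `α`, which by the Leibniz rule amounts to applying `∂_a` to the
whole product. On surjections `Fin (m + 1) → Fin (k + 1)` this is the dichotomy whether the
restriction to `Fin m` is still surjective or misses exactly the value of the last point. -/

theorem Derivation.leibniz_prod {R A M ι : Type*} [CommSemiring R] [CommSemiring A]
    [AddCommMonoid M] [Algebra R A] [Module A M] [Module R M] [DecidableEq ι]
    (D : Derivation R A M) (s : Finset ι) (f : ι → A) :
    D (∏ i ∈ s, f i) = ∑ i ∈ s, (∏ j ∈ s.erase i, f j) • D (f i) := by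
  induction s using Finset.induction_on with
  | empty => simp
  | insert a s ha ih =>
    rw [prod_insert ha, D.leibniz, ih, sum_insert ha, erase_insert ha, smul_sum, add_comm]
    congr 1
    refine sum_congr rfl fun i hi => ?_
    rw [erase_insert_of_ne (ne_of_mem_of_not_mem hi ha).symm,
      prod_insert fun h => ha (mem_of_mem_erase h), mul_smul]

theorem Fin.sort_insert_last_map_castSuccEmb {m : ℕ} (b : Finset (Fin m)) :
    (insert (Fin.last m) (b.map Fin.castSuccEmb)).sort (· ≤ ·) =
      (b.sort (· ≤ ·)).map Fin.castSucc ++ [Fin.last m] := by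
  refine (sortedLT_sort _).eq_of_mem_iff (List.Pairwise.sortedLT ?_) fun p => ?_
  · refine List.pairwise_append.mpr ⟨?_, List.pairwise_singleton _ _, ?_⟩
    · exact (sortedLT_sort b).pairwise.map _ fun _ _ => Fin.castSucc_lt_castSucc_iff.mpr
    · simp [Fin.castSucc_lt_last]
  · cases p using Fin.lastCases <;> simp [Fin.castSucc_ne_last]

theorem Fin.surjective_snoc_succAbove_comp_iff {m k : ℕ} (h : Fin m → Fin k) (c : Fin (k + 1)) :
    Surjective (Fin.snoc (c.succAbove ∘ h) c : Fin (m + 1) → Fin (k + 1)) ↔ Surjective h := by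
  simp only [← Set.range_eq_univ, Fin.range_snoc, Set.range_comp]
  constructor
  · intro hs
    refine Set.eq_univ_of_forall fun y => ?_
    have hy : c.succAbove y ∈ insert c (c.succAbove '' Set.range h) := hs ▸ Set.mem_univ _
    rcases hy with hy | ⟨x, hx, hxy⟩
    · exact absurd hy (Fin.succAbove_ne c y)
    · exact Fin.succAbove_right_injective hxy ▸ hx
  · intro hs
    rw [hs, Set.image_univ, Fin.range_succAbove, Set.insert_eq, Set.union_compl_self]

theorem Fin.ite_surjective_snoc_eq_add {M β : Type*} [AddCommMonoid M] [Fintype β]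
    [DecidableEq β] {m : ℕ} (h : Fin m → β) (c : β) (x : M) :
    (if Surjective (Fin.snoc h c : Fin (m + 1) → β) then x else 0) =
      (if Surjective h then x else 0) +
        if ∀ p, h p ≠ c then (if Surjective (Fin.snoc h c : Fin (m + 1) → β) then x else 0)
        else 0 := by
  simp only [← Set.range_eq_univ, Fin.range_snoc]
  by_cases hs : Set.range h = Set.univ
  · have hc : ¬ ∀ p, h p ≠ c := fun hne =>
      let ⟨p, hp⟩ := Set.eq_univ_iff_forall.mp hs c
      hne p hp
    simp [hs, hc]
  · by_cases hsc : insert c (Set.range h) = Set.univ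
    · have hc : ∀ p, h p ≠ c := fun p hp => by
        rw [Set.insert_eq_of_mem (Set.mem_range.mpr ⟨p, hp⟩)] at hsc
        exact hs hsc
      simp [hs, hsc, hc]
    · simp [hs, hsc]

theorem Fin.sum_ite_forall_ne_eq_sum_succAbove_comp {M : Type*} [AddCommMonoid M] {m k : ℕ}
    (c : Fin (k + 1)) (F : (Fin m → Fin (k + 1)) → M) :
    ∑ h, (if ∀ p, h p ≠ c then F h else 0) = ∑ h : Fin m → Fin k, F (c.succAbove ∘ h) := by
  rw [← sum_filter]
  symm
  refine sum_nbij (c.succAbove ∘ ·) (fun h _ => ?_) ?_ (fun h hh => ?_) fun _ _ => rfl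
  · simp [Fin.succAbove_ne]
  · exact fun h₁ _ h₂ _ e => Fin.succAbove_right_injective.comp_left e
  · choose y hy using fun p => Fin.exists_succAbove_eq ((mem_filter.mp hh).2 p)
    exact ⟨y, mem_coe.mpr (mem_univ _), funext hy⟩

section

variable {σ S : Type} [CommRing S]

theorem tderiv_eq_pderiv (a : σ) : tderiv a = ⇑(MvPowerSeries.pderiv S a) := by
  funext f
  ext e
  rw [MvPowerSeries.coeff_pderiv, mul_comm]
  show (e a + 1) • f (e + Finsupp.single a 1) = _
  rw [nsmul_eq_mul]
  push_cast
  rfl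

theorem Ufn_append_singleton (Γ : MvPowerSeries σ S) (l : List σ) (a : σ) :
    Ufn Γ (l ++ [a]) = hnabla Γ a (Ufn Γ l) := by
  simp only [Ufn, List.foldl_append, List.foldl_cons, List.foldl_nil]

theorem Ufn_ofFn_succ (Γ : MvPowerSeries σ S) {m : ℕ} (α : Fin (m + 1) → σ) :
    Ufn Γ (List.ofFn α) = hnabla Γ (α (Fin.last m)) (Ufn Γ (List.ofFn (Fin.init α))) := by
  rw [List.ofFn_succ', List.concat_eq_append, Ufn_append_singleton]
  rfl

theorem coeff_hnabla_zero (Γ : MvPowerSeries σ S) (a : σ) (w : PowerSeries (MvPowerSeries σ S)) :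
    PowerSeries.coeff 0 (hnabla Γ a w) = tderiv a Γ * PowerSeries.coeff 0 w := by
  simp [hnabla]

theorem coeff_hnabla_succ (Γ : MvPowerSeries σ S) (a : σ) (w : PowerSeries (MvPowerSeries σ S))
    (k : ℕ) : PowerSeries.coeff (k + 1) (hnabla Γ a w) =
      tderiv a (PowerSeries.coeff k w) + tderiv a Γ * PowerSeries.coeff (k + 1) w := by
  simp [hnabla, tderivH, PowerSeries.coeff_succ_X_mul, PowerSeries.coeff_C_mul]

theorem Gblock_empty (Γ : MvPowerSeries σ S) {m : ℕ} (α : Fin m → σ) : Gblock Γ α ∅ = Γ := by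
  simp [Gblock]

theorem Gblock_map_castSucc (Γ : MvPowerSeries σ S) {m : ℕ} (α : Fin (m + 1) → σ)
    (b : Finset (Fin m)) :
    Gblock Γ α (b.map Fin.castSuccEmb) = Gblock Γ (Fin.init α) b := by
  rw [Gblock, Gblock, ← map_sort _ _ _ _ fun _ _ _ _ => Fin.castSucc_le_castSucc_iff.symm,
    List.map_map]
  rfl

theorem Gblock_insert_last_map_castSucc (Γ : MvPowerSeries σ S) {m : ℕ} (α : Fin (m + 1) → σ)
    (b : Finset (Fin m)) :
    Gblock Γ α (insert (Fin.last m) (b.map Fin.castSuccEmb)) =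
      tderiv (α (Fin.last m)) (Gblock Γ (Fin.init α) b) := by
  rw [Gblock, Gblock, Fin.sort_insert_last_map_castSuccEmb, List.map_append, List.map_map,
    List.foldl_append]
  rfl

theorem Gblock_filter_snoc (Γ : MvPowerSeries σ S) {m k : ℕ} (α : Fin (m + 1) → σ)
    (h : Fin m → Fin k) (c j : Fin k) :
    Gblock Γ α (univ.filter fun p => (Fin.snoc h c : Fin (m + 1) → Fin k) p = j) =
      if j = c then tderiv (α (Fin.last m)) (Gblock Γ (Fin.init α) (univ.filter (h · = j)))
      else Gblock Γ (Fin.init α) (univ.filter (h · = j)) := by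
  split_ifs with hj
  · rw [← Gblock_insert_last_map_castSucc]
    congr 1
    ext p
    cases p using Fin.lastCases <;> simp [hj, Fin.castSucc_ne_last]
  · rw [← Gblock_map_castSucc]
    congr 1
    ext p
    cases p using Fin.lastCases <;> simp [Ne.symm hj, Fin.castSucc_ne_last]

noncomputable def blockProd (Γ : MvPowerSeries σ S) {m k : ℕ} (α : Fin m → σ)
    (g : Fin m → Fin k) : MvPowerSeries σ S :=
  ∏ j, Gblock Γ α (univ.filter (g · = j))

theorem blockProd_snoc (Γ : MvPowerSeries σ S) {m k : ℕ} (α : Fin (m + 1) → σ)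
    (h : Fin m → Fin k) (c : Fin k) :
    blockProd Γ α (Fin.snoc h c) =
      (∏ j ∈ univ.erase c, Gblock Γ (Fin.init α) (univ.filter (h · = j))) *
        tderiv (α (Fin.last m)) (Gblock Γ (Fin.init α) (univ.filter (h · = c))) := by
  rw [blockProd, ← prod_erase_mul _ _ (mem_univ c), Gblock_filter_snoc, if_pos rfl]
  congr 1
  refine prod_congr rfl fun j hj => ?_
  rw [Gblock_filter_snoc, if_neg (ne_of_mem_erase hj)]

theorem sum_blockProd_snoc (Γ : MvPowerSeries σ S) {m k : ℕ} (α : Fin (m + 1) → σ)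
    (h : Fin m → Fin k) :
    ∑ c, blockProd Γ α (Fin.snoc h c) = tderiv (α (Fin.last m)) (blockProd Γ (Fin.init α) h) := by
  simp only [blockProd_snoc]
  rw [blockProd, tderiv_eq_pderiv, Derivation.leibniz_prod]
  rfl

theorem blockProd_snoc_succAbove (Γ : MvPowerSeries σ S) {m k : ℕ} (α : Fin (m + 1) → σ)
    (h : Fin m → Fin k) (c : Fin (k + 1)) :
    blockProd Γ α (Fin.snoc (c.succAbove ∘ h) c) =
      tderiv (α (Fin.last m)) Γ * blockProd Γ (Fin.init α) h := by
  rw [blockProd, Fin.prod_univ_succAbove _ c, Gblock_filter_snoc, if_pos rfl, blockProd]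
  have hc : (univ.filter fun p => (c.succAbove ∘ h) p = c) = ∅ := by
    simp [Fin.succAbove_ne]
  congr 1
  · rw [hc, Gblock_empty]
  · refine prod_congr rfl fun y _ => ?_
    rw [Gblock_filter_snoc, if_neg (Fin.succAbove_ne c y)]
    simp

noncomputable def surjBlockSum (Γ : MvPowerSeries σ S) {m : ℕ} (α : Fin m → σ) (k : ℕ) :
    MvPowerSeries σ S :=
  ∑ g : Fin m → Fin k, if Surjective g then blockProd Γ α g else 0

theorem surjBlockSum_succ (Γ : MvPowerSeries σ S) {m : ℕ} (α : Fin (m + 1) → σ) (k : ℕ) :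
    surjBlockSum Γ α (k + 1) =
      (k + 1) • (tderiv (α (Fin.last m)) Γ * surjBlockSum Γ (Fin.init α) k) +
        tderiv (α (Fin.last m)) (surjBlockSum Γ (Fin.init α) (k + 1)) := by
  have hsnoc : surjBlockSum Γ α (k + 1) = ∑ c, ∑ h : Fin m → Fin (k + 1),
      if Surjective (Fin.snoc h c : Fin (m + 1) → Fin (k + 1)) then blockProd Γ α (Fin.snoc h c)
      else 0 := by
    rw [surjBlockSum, ← (Fin.snocEquiv fun _ => Fin (k + 1)).sum_comp, Fintype.sum_prod_type]
    rfl
  have hsingleton : ∀ c : Fin (k + 1), ∑ h : Fin m → Fin (k + 1),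
      (if ∀ p, h p ≠ c then
        (if Surjective (Fin.snoc h c : Fin (m + 1) → Fin (k + 1)) then blockProd Γ α (Fin.snoc h c)
        else 0) else 0) = tderiv (α (Fin.last m)) Γ * surjBlockSum Γ (Fin.init α) k := by
    intro c
    simp only [Fin.sum_ite_forall_ne_eq_sum_succAbove_comp, Fin.surjective_snoc_succAbove_comp_iff,
      blockProd_snoc_succAbove, surjBlockSum, mul_sum, mul_ite, mul_zero]
  have hjoin : ∑ h : Fin m → Fin (k + 1), ∑ c,
      (if Surjective h then blockProd Γ α (Fin.snoc h c) else 0) =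
        tderiv (α (Fin.last m)) (surjBlockSum Γ (Fin.init α) (k + 1)) := by
    simp only [sum_ite_irrel, sum_const_zero, sum_blockProd_snoc, surjBlockSum, tderiv_eq_pderiv,
      map_sum]
    refine sum_congr rfl fun h _ => ?_
    split_ifs <;> simp
  rw [hsnoc, sum_congr rfl fun c _ => sum_congr rfl fun h _ => Fin.ite_surjective_snoc_eq_add h c _]
  simp only [sum_add_distrib, hsingleton, sum_const, card_univ, Fintype.card_fin]
  rw [sum_comm, hjoin, add_comm]

theorem surjBlockSum_of_lt (Γ : MvPowerSeries σ S) {m k : ℕ} (α : Fin m → σ) (hk : m < k) :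
    surjBlockSum Γ α k = 0 :=
  sum_eq_zero fun g _ => if_neg fun hg =>
    (Fintype.card_le_of_surjective g hg).not_gt (by simpa using hk)

theorem surjBlockSum_zero (Γ : MvPowerSeries σ S) {m : ℕ} (α : Fin m → σ) :
    surjBlockSum Γ α 0 = if m = 0 then 1 else 0 := by
  rcases m with _ | m <;> simp [surjBlockSum, blockProd, Surjective]

variable [Algebra ℚ S]

noncomputable def partitionSum (Γ : MvPowerSeries σ S) {m : ℕ} (α : Fin m → σ) (k : ℕ) :
    MvPowerSeries σ S :=
  ((k.factorial : ℚ)⁻¹) • surjBlockSum Γ α k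

theorem iU_eq_partitionSum (Γ : MvPowerSeries σ S) {m : ℕ} (α : Fin m → σ) (i : ℕ) :
    iU Γ α i = partitionSum Γ α (m - i) :=
  rfl

theorem partitionSum_succ (Γ : MvPowerSeries σ S) {m : ℕ} (α : Fin (m + 1) → σ) (k : ℕ) :
    partitionSum Γ α (k + 1) =
      tderiv (α (Fin.last m)) Γ * partitionSum Γ (Fin.init α) k +
        tderiv (α (Fin.last m)) (partitionSum Γ (Fin.init α) (k + 1)) := by
  have hfact : ((k + 1).factorial : ℚ)⁻¹ * (k + 1 : ℕ) = (k.factorial : ℚ)⁻¹ := by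
    rw [Nat.factorial_succ, Nat.cast_mul, mul_inv, mul_right_comm, inv_mul_cancel₀ (by positivity),
      one_mul]
  rw [partitionSum, surjBlockSum_succ, smul_add, ← Nat.cast_smul_eq_nsmul ℚ, smul_smul, hfact,
    partitionSum, partitionSum, mul_smul_comm, tderiv_eq_pderiv, map_rat_smul]

theorem partitionSum_of_lt (Γ : MvPowerSeries σ S) {m k : ℕ} (α : Fin m → σ) (hk : m < k) :
    partitionSum Γ α k = 0 := by
  rw [partitionSum, surjBlockSum_of_lt Γ α hk, smul_zero]

theorem partitionSum_zero (Γ : MvPowerSeries σ S) {m : ℕ} (α : Fin m → σ) :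
    partitionSum Γ α 0 = if m = 0 then 1 else 0 := by
  simp [partitionSum, surjBlockSum_zero]

theorem tderiv_partitionSum_zero (Γ : MvPowerSeries σ S) {m : ℕ} (α : Fin m → σ) (a : σ) :
    tderiv a (partitionSum Γ α 0) = 0 := by
  rw [partitionSum_zero, tderiv_eq_pderiv]
  split_ifs
  · exact MvPowerSeries.pderiv_one
  · exact map_zero _

theorem coeff_Ufn_ofFn (Γ : MvPowerSeries σ S) {m : ℕ} (α : Fin m → σ) (i : ℕ) :
    PowerSeries.coeff i (Ufn Γ (List.ofFn α)) =
      if i ≤ m then partitionSum Γ α (m - i) else 0 := by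
  induction m generalizing i with
  | zero =>
    rw [List.ofFn_zero]
    simp [Ufn, PowerSeries.coeff_one, partitionSum_zero]
  | succ m ih =>
    rw [Ufn_ofFn_succ]
    rcases i with _ | j
    · rw [coeff_hnabla_zero, ih, if_pos m.zero_le, if_pos (m + 1).zero_le, Nat.sub_zero,
        Nat.sub_zero, partitionSum_succ Γ α,
        partitionSum_of_lt _ _ m.lt_succ_self, tderiv_eq_pderiv, map_zero, add_zero]
    · rw [coeff_hnabla_succ, ih, ih]
      rcases lt_trichotomy j m with hj | rfl | hj
      · obtain ⟨k, rfl⟩ : ∃ k, m = j + k + 1 := ⟨m - j - 1, by omega⟩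
        rw [if_pos (by omega), if_pos (by omega), if_pos (by omega),
          show j + k + 1 - j = k + 1 by omega, show j + k + 1 - (j + 1) = k by omega,
          show j + k + 1 + 1 - (j + 1) = k + 1 by omega, partitionSum_succ Γ α, add_comm]
      · rw [if_pos le_rfl, Nat.sub_self, tderiv_partitionSum_zero, if_neg (by omega),
          if_pos le_rfl, Nat.sub_self, partitionSum_zero, if_neg (by omega), mul_zero, add_zero]
      · simp [show ¬ j ≤ m by omega, show ¬ j + 1 ≤ m by omega, show ¬ j + 1 ≤ m + 1 by omega,
          tderiv_eq_pderiv]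

end

/-- Expansion of `U_{α₁⋯α_m} = (ℏ∇_{α_m})⋯(ℏ∇_{α₁})1` in powers of `ℏ`:
`U_α = Σ_{i=0}^{m−1} ⁱU_α ℏⁱ` with `ⁱU_α` the set-partition expressions in the
derivatives of `Γ`. -/
theorem U_expansion (Γ : MvPowerSeries I R) (m : ℕ) (hm : 1 ≤ m) (α : Fin m → I) :
    Ufn Γ (List.ofFn α) =
      ∑ i ∈ range m, PowerSeries.C (iU Γ α i) * PowerSeries.X ^ i := by
  ext n
  simp only [coeff_Ufn_ofFn, map_sum, PowerSeries.coeff_C_mul_X_pow, sum_ite_eq, mem_range,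
    iU_eq_partitionSum]
  rcases lt_trichotomy n m with hn | rfl | hn
  · rw [if_pos hn.le, if_pos hn]
  · rw [if_pos le_rfl, if_neg (lt_irrefl n), Nat.sub_self, partitionSum_zero, if_neg (by omega)]
  · rw [if_neg (by omega), if_neg (by omega)]
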